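/- arXiv:1412.3264 — 4 statements merged into one kernel-verified Lean document; each statement's English description precedes it below -/
import Mathlib

section
/- For the Hadamard walk started from φ = ᵀ[α, β] with α, β ∈ ℍ, |α|² + |β|² = 1, the time-3 distribution is symmetric (P(X₃ = x) = P(X₃ = −x) for all x) if and only if Re(α·β̄) = 0 and |α| = |β| = 1/√2. In particular, no real initial state (α, β ∈ ℝ) gives a symmetric time-3 distribution. -/
open Quaternion Matrix

/-- one step of the quaternionic quantum walk on ℤ -/
noncomputable def step (P Q : Matrix (Fin 2) (Fin 2) ℍ[ℝ]) (Ψ : ℤ → Fin 2 → ℍ[ℝ]) :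
    ℤ → Fin 2 → ℍ[ℝ] :=
  fun x => P.mulVec (Ψ (x + 1)) + Q.mulVec (Ψ (x - 1))

/-- probability of finding the walker at position x at time n -/
noncomputable def prob (P Q : Matrix (Fin 2) (Fin 2) ℍ[ℝ]) (Ψ₀ : ℤ → Fin 2 → ℍ[ℝ])
    (n : ℕ) (x : ℤ) : ℝ :=
  ‖(step P Q)^[n] Ψ₀ x 0‖ ^ 2 + ‖(step P Q)^[n] Ψ₀ x 1‖ ^ 2

noncomputable def r : ℍ[ℝ] := (((Real.sqrt 2)⁻¹ : ℝ) : ℍ[ℝ])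

noncomputable def PH : Matrix (Fin 2) (Fin 2) ℍ[ℝ] := !![r, r; 0, 0]
noncomputable def QH : Matrix (Fin 2) (Fin 2) ℍ[ℝ] := !![0, 0; r, -r]

noncomputable def φ₀ (α β : ℍ[ℝ]) : ℤ → Fin 2 → ℍ[ℝ] :=
  fun x => if x = 0 then ![α, β] else 0

/-! After three steps the amplitude at a site is the sum over the coin paths of length three ending
there, an explicit linear combination of `α` and `β` supported on `x = ∓3, ∓1`. Since
`‖α ± β‖² = ‖α‖² + ‖β‖² ± 2 Re(α β̄)`, symmetry between `±3` says exactly `Re(α β̄) = 0`, and then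
symmetry between `±1` says `‖α‖ = ‖β‖`; normalisation pins both norms to `1/√2`. For real `α, β`
these conditions read `α β = 0` and `|α| = |β|`, which force `α = β = 0`. -/

lemma step_iterate_three_apply (P Q : Matrix (Fin 2) (Fin 2) ℍ[ℝ]) (Ψ : ℤ → Fin 2 → ℍ[ℝ])
    (x : ℤ) :
    (step P Q)^[3] Ψ x = P *ᵥ P *ᵥ P *ᵥ Ψ (x + 3)
      + (P *ᵥ P *ᵥ Q *ᵥ Ψ (x + 1) + P *ᵥ Q *ᵥ P *ᵥ Ψ (x + 1) + Q *ᵥ P *ᵥ P *ᵥ Ψ (x + 1))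
      + (P *ᵥ Q *ᵥ Q *ᵥ Ψ (x - 1) + Q *ᵥ P *ᵥ Q *ᵥ Ψ (x - 1) + Q *ᵥ Q *ᵥ P *ᵥ Ψ (x - 1))
      + Q *ᵥ Q *ᵥ Q *ᵥ Ψ (x - 3) := by
  simp only [Function.iterate_succ_apply', Function.iterate_zero, id, step, mulVec_add,
    add_sub_cancel_right, sub_add_cancel]
  rw [show x + 1 + 1 + 1 = x + 3 by ring, show x - 1 - 1 - 1 = x - 3 by ring]
  abel

lemma PH_mulVec (v : Fin 2 → ℍ[ℝ]) : PH *ᵥ v = ![(√2)⁻¹ • (v 0 + v 1), 0] := by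
  ext i : 1
  fin_cases i <;> simp [PH, r, mulVec, dotProduct, Fin.sum_univ_two, ← coe_mul_eq_smul]

lemma QH_mulVec (v : Fin 2 → ℍ[ℝ]) : QH *ᵥ v = ![0, (√2)⁻¹ • (v 0 - v 1)] := by
  ext i : 1
  fin_cases i <;>
    simp [QH, r, mulVec, dotProduct, Fin.sum_univ_two, ← coe_mul_eq_smul, sub_eq_add_neg]

section Amplitudes

variable (α β : ℍ[ℝ])

lemma hadamard_iterate_three_neg_three :
    (step PH QH)^[3] (φ₀ α β) (-3) = ((√2)⁻¹ ^ 3 : ℝ) • ![α + β, 0] := by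
  simp only [step_iterate_three_apply, φ₀, PH_mulVec, QH_mulVec]
  ext i : 1
  fin_cases i <;> norm_num
  module

lemma hadamard_iterate_three_neg_one :
    (step PH QH)^[3] (φ₀ α β) (-1) = ((√2)⁻¹ ^ 3 : ℝ) • ![(2 : ℝ) • α, α + β] := by
  simp only [step_iterate_three_apply, φ₀, PH_mulVec, QH_mulVec]
  ext i : 1
  fin_cases i <;> norm_num <;> module

lemma hadamard_iterate_three_one :
    (step PH QH)^[3] (φ₀ α β) 1 = ((√2)⁻¹ ^ 3 : ℝ) • ![β - α, -((2 : ℝ) • β)] := by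
  simp only [step_iterate_three_apply, φ₀, PH_mulVec, QH_mulVec]
  ext i : 1
  fin_cases i <;> norm_num <;> module

lemma hadamard_iterate_three_three :
    (step PH QH)^[3] (φ₀ α β) 3 = ((√2)⁻¹ ^ 3 : ℝ) • ![0, α - β] := by
  simp only [step_iterate_three_apply, φ₀, PH_mulVec, QH_mulVec]
  ext i : 1
  fin_cases i <;> norm_num
  module

lemma hadamard_iterate_three_of_ne {x : ℤ} (h₃ : x ≠ -3) (h₁ : x ≠ -1) (h₁' : x ≠ 1)
    (h₃' : x ≠ 3) : (step PH QH)^[3] (φ₀ α β) x = 0 := by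
  simp only [step_iterate_three_apply, φ₀]
  rw [if_neg (by omega), if_neg (by omega), if_neg (by omega), if_neg (by omega)]
  simp

end Amplitudes

lemma inv_sqrt_two_pow_three_sq : ((√2)⁻¹ ^ 3) ^ 2 = (1 / 8 : ℝ) := by
  rw [← pow_mul, inv_pow, show 3 * 2 = 2 * 3 by rfl, pow_mul, Real.sq_sqrt zero_le_two]
  norm_num

lemma norm_sq_add_norm_sq_smul_vecCons {E : Type*} [SeminormedAddCommGroup E]
    [NormedSpace ℝ E] (c : ℝ) (u w : E) :
    ‖(c • ![u, w]) 0‖ ^ 2 + ‖(c • ![u, w]) 1‖ ^ 2 = c ^ 2 * (‖u‖ ^ 2 + ‖w‖ ^ 2) := by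
  simp only [Pi.smul_apply, Matrix.cons_val_zero, Matrix.cons_val_one, norm_smul,
    Real.norm_eq_abs, mul_pow, sq_abs]
  ring

section Probabilities

variable (α β : ℍ[ℝ])

lemma hadamard_prob_three_neg_three : prob PH QH (φ₀ α β) 3 (-3) = ‖α + β‖ ^ 2 / 8 := by
  rw [prob, hadamard_iterate_three_neg_three, norm_sq_add_norm_sq_smul_vecCons,
    inv_sqrt_two_pow_three_sq, norm_zero]
  ring

lemma hadamard_prob_three_neg_one :
    prob PH QH (φ₀ α β) 3 (-1) = (4 * ‖α‖ ^ 2 + ‖α + β‖ ^ 2) / 8 := by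
  rw [prob, hadamard_iterate_three_neg_one, norm_sq_add_norm_sq_smul_vecCons,
    inv_sqrt_two_pow_three_sq, norm_smul, Real.norm_two]
  ring

lemma hadamard_prob_three_one :
    prob PH QH (φ₀ α β) 3 1 = (4 * ‖β‖ ^ 2 + ‖α - β‖ ^ 2) / 8 := by
  rw [prob, hadamard_iterate_three_one, norm_sq_add_norm_sq_smul_vecCons,
    inv_sqrt_two_pow_three_sq, norm_neg, norm_smul, Real.norm_two, norm_sub_rev]
  ring

lemma hadamard_prob_three_three : prob PH QH (φ₀ α β) 3 3 = ‖α - β‖ ^ 2 / 8 := by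
  rw [prob, hadamard_iterate_three_three, norm_sq_add_norm_sq_smul_vecCons,
    inv_sqrt_two_pow_three_sq, norm_zero]
  ring

lemma hadamard_prob_three_of_ne {x : ℤ} (h₃ : x ≠ -3) (h₁ : x ≠ -1) (h₁' : x ≠ 1)
    (h₃' : x ≠ 3) : prob PH QH (φ₀ α β) 3 x = 0 := by
  simp [prob, hadamard_iterate_three_of_ne α β h₃ h₁ h₁' h₃']

end Probabilities

lemma forall_eq_neg_iff_of_support {f : ℤ → ℝ}
    (hf : ∀ x, x ≠ -3 → x ≠ -1 → x ≠ 1 → x ≠ 3 → f x = 0) :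
    (∀ x, f x = f (-x)) ↔ f (-3) = f 3 ∧ f (-1) = f 1 := by
  refine ⟨fun h => ⟨h (-3), h (-1)⟩, fun ⟨h₃, h₁⟩ x => ?_⟩
  by_cases hx : x = -3 ∨ x = -1 ∨ x = 1 ∨ x = 3
  · rcases hx with rfl | rfl | rfl | rfl <;> simp [h₃, h₁]
  · simp only [not_or] at hx
    rw [hf x hx.1 hx.2.1 hx.2.2.1 hx.2.2.2, hf (-x) (by omega) (by omega) (by omega) (by omega)]

lemma hadamard_three_symmetric_iff (α β : ℍ[ℝ]) :
    (∀ x : ℤ, prob PH QH (φ₀ α β) 3 x = prob PH QH (φ₀ α β) 3 (-x)) ↔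
      (α * star β).re = 0 ∧ ‖α‖ = ‖β‖ := by
  rw [forall_eq_neg_iff_of_support fun _ => hadamard_prob_three_of_ne α β,
    hadamard_prob_three_neg_three, hadamard_prob_three_three, hadamard_prob_three_neg_one,
    hadamard_prob_three_one, norm_add_sq_real, norm_sub_sq_real, Quaternion.inner_def,
    ← sq_eq_sq₀ (norm_nonneg α) (norm_nonneg β)]
  constructor <;> rintro ⟨_, _⟩ <;> constructor <;> linarith

lemma eq_iff_eq_inv_sqrt_two_of_sq_add_sq {a b : ℝ} (ha : 0 ≤ a) (hb : 0 ≤ b)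
    (h : a ^ 2 + b ^ 2 = 1) : a = b ↔ a = (√2)⁻¹ ∧ b = (√2)⁻¹ := by
  have key : ∀ c : ℝ, 0 ≤ c → (c = (√2)⁻¹ ↔ c ^ 2 = 1 / 2) := fun c hc => by
    rw [← sq_eq_sq₀ hc (by positivity), inv_pow, Real.sq_sqrt zero_le_two, one_div]
  rw [key a ha, key b hb]
  constructor
  · rintro rfl
    constructor <;> linarith
  · rintro ⟨ha', hb'⟩
    rwa [← sq_eq_sq₀ ha hb, hb']

theorem hadamard_time_three_symmetric :
    (∀ α β : ℍ[ℝ], ‖α‖ ^ 2 + ‖β‖ ^ 2 = 1 →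
      ((∀ x : ℤ, prob PH QH (φ₀ α β) 3 x = prob PH QH (φ₀ α β) 3 (-x)) ↔
        ((α * star β).re = 0 ∧ ‖α‖ = (Real.sqrt 2)⁻¹ ∧ ‖β‖ = (Real.sqrt 2)⁻¹))) ∧
    (∀ a b : ℝ, a ^ 2 + b ^ 2 = 1 →
      ¬ (∀ x : ℤ, prob PH QH (φ₀ ((a : ℍ[ℝ])) ((b : ℍ[ℝ]))) 3 x =
          prob PH QH (φ₀ ((a : ℍ[ℝ])) ((b : ℍ[ℝ]))) 3 (-x)) ) := by
  refine ⟨fun α β h => ?_, fun a b h hsym => ?_⟩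
  · rw [hadamard_three_symmetric_iff,
      eq_iff_eq_inv_sqrt_two_of_sq_add_sq (norm_nonneg α) (norm_nonneg β) h]
  · obtain ⟨hre, hnorm⟩ := (hadamard_three_symmetric_iff _ _).mp hsym
    rw [star_coe, ← coe_mul, re_coe] at hre
    rw [norm_coe, norm_coe, ← sq_eq_sq₀ (norm_nonneg a) (norm_nonneg b), Real.norm_eq_abs,
      Real.norm_eq_abs, sq_abs, sq_abs] at hnorm
    nlinarith
end

section
/- Let U = [0 1; 1 0] and consider the associated quaternionic quantum walk on ℤ. Define Ψ by: for each x ∈ ℤ, Ψᴸ(2x) = α_{2x}, Ψᴿ(2x) = β_{2x}, Ψᴸ(2x−1) = β_{2x}·λ, Ψᴿ(2x+1) = α_{2x}·λ, where λ ∈ {1, −1} and α_{2x}, β_{2x} ∈ ℍ. Then the walk operator U^(s) satisfies U^(s)Ψ = Ψλ, i.e., Ψ is a right eigenvector with eigenvalue λ. -/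
/-!
The flip walk sends the right component one site to the left and the left component one site to
the right, so `U⁽ˢ⁾Ψ = Ψλ` amounts to `Ψᴿ(x+1) = Ψᴸ(x)λ` and `Ψᴸ(x-1) = Ψᴿ(x)λ` for all `x`. At even
`x` these are the equations defining the odd entries of `Ψ`; at odd `x` they follow from those
equations because `λ² = 1`.
-/

open Quaternion Matrix

theorem step_flip_apply_zero (Ψ : ℤ → Fin 2 → ℍ[ℝ]) (x : ℤ) :
    step !![0, 1; 0, 0] !![0, 0; 1, 0] Ψ x 0 = Ψ (x + 1) 1 := by
  simp [step, dotProduct]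

theorem step_flip_apply_one (Ψ : ℤ → Fin 2 → ℍ[ℝ]) (x : ℤ) :
    step !![0, 1; 0, 0] !![0, 0; 1, 0] Ψ x 1 = Ψ (x - 1) 0 := by
  simp [step, dotProduct]

theorem step_flip_eq_mul_right_iff (Ψ : ℤ → Fin 2 → ℍ[ℝ]) (lam : ℍ[ℝ]) :
    step !![0, 1; 0, 0] !![0, 0; 1, 0] Ψ = (fun x i => Ψ x i * lam) ↔
      ∀ x, Ψ (x + 1) 1 = Ψ x 0 * lam ∧ Ψ (x - 1) 0 = Ψ x 1 * lam := by
  simp only [funext_iff, Fin.forall_fin_two, step_flip_apply_zero, step_flip_apply_one]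

theorem flip_walk_right_eigenvector (lam : ℍ[ℝ]) (hlam : lam = 1 ∨ lam = -1)
    (α β : ℤ → ℍ[ℝ]) (Ψ : ℤ → Fin 2 → ℍ[ℝ])
    (hL : ∀ x : ℤ, Ψ (2 * x) 0 = α x)
    (hR : ∀ x : ℤ, Ψ (2 * x) 1 = β x)
    (hLodd : ∀ x : ℤ, Ψ (2 * x - 1) 0 = β x * lam)
    (hRodd : ∀ x : ℤ, Ψ (2 * x + 1) 1 = α x * lam) :
    step !![0, 1; 0, 0] !![0, 0; 1, 0] Ψ = fun x i => Ψ x i * lam := by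
  have mul_lam_lam (q : ℍ[ℝ]) : q * lam * lam = q := by
    rw [mul_assoc, mul_self_eq_one_iff.mpr hlam, mul_one]
  rw [step_flip_eq_mul_right_iff]
  intro x
  obtain ⟨k, rfl | rfl⟩ := Int.even_or_odd' x
  · rw [hRodd, hL, hLodd, hR]
    exact ⟨rfl, rfl⟩
  · have hsucc : 2 * k + 1 + 1 = 2 * (k + 1) := by ring
    have hpred : 2 * k + 1 = 2 * (k + 1) - 1 := by ring
    rw [hsucc, add_sub_cancel_right, hR, hL, hRodd, mul_lam_lam, hpred, hLodd, mul_lam_lam]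
    exact ⟨rfl, rfl⟩
end

section
/- Let U = [0 1; −1 0] and consider the associated quaternionic quantum walk on ℤ. For any purely imaginary unit quaternion λ = x₁i + x₂j + x₃k with x₁² + x₂² + x₃² = 1, the state Ψ defined by Ψᴸ(2x) = α_{2x}, Ψᴿ(2x) = β_{2x}, Ψᴸ(2x−1) = −β_{2x}·λ, Ψᴿ(2x+1) = α_{2x}·λ satisfies U^(s)Ψ = Ψλ. -/
/-! The walk sends `Ψ(x)` to `(Ψᴿ(x+1), -Ψᴸ(x-1))`. On even sites the eigenvalue equation is
the defining relation of the odd components; on odd sites it reduces, after substituting those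
relations, to `λ² = -1`, which holds exactly for the pure unit quaternions. -/

open Quaternion Matrix

theorem Quaternion.mul_self_eq_neg_one {R : Type*} [CommRing R] [LinearOrder R]
    [IsStrictOrderedRing R] {q : ℍ[R]} (hre : q.re = 0)
    (hnorm : q.imI ^ 2 + q.imJ ^ 2 + q.imK ^ 2 = 1) : q * q = -1 := by
  have hnormSq : normSq q = 1 := by rw [normSq_def', hre]; linear_combination hnorm
  rw [← sq, sq_eq_neg_normSq.mpr hre, hnormSq, coe_one]

theorem step_rotation_apply_zero (Ψ : ℤ → Fin 2 → ℍ[ℝ]) (x : ℤ) :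
    step !![0, 1; 0, 0] !![0, 0; -1, 0] Ψ x 0 = Ψ (x + 1) 1 := by
  simp [step, vecHead, vecTail]

theorem step_rotation_apply_one (Ψ : ℤ → Fin 2 → ℍ[ℝ]) (x : ℤ) :
    step !![0, 1; 0, 0] !![0, 0; -1, 0] Ψ x 1 = -Ψ (x - 1) 0 := by
  simp [step, vecHead, vecTail]

theorem rotation_walk_right_eigenvector (lam : ℍ[ℝ])
    (hre : lam.re = 0) (hnorm : lam.imI ^ 2 + lam.imJ ^ 2 + lam.imK ^ 2 = 1)
    (α β : ℤ → ℍ[ℝ]) (Ψ : ℤ → Fin 2 → ℍ[ℝ])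
    (hL : ∀ x : ℤ, Ψ (2 * x) 0 = α x)
    (hR : ∀ x : ℤ, Ψ (2 * x) 1 = β x)
    (hLodd : ∀ x : ℤ, Ψ (2 * x - 1) 0 = -(β x * lam))
    (hRodd : ∀ x : ℤ, Ψ (2 * x + 1) 1 = α x * lam) :
    step !![0, 1; 0, 0] !![0, 0; -1, 0] Ψ = fun x i => Ψ x i * lam := by
  have hsq := Quaternion.mul_self_eq_neg_one hre hnorm
  funext x i
  obtain ⟨y, rfl | rfl⟩ := Int.even_or_odd' x
  · match i with
    | 0 => rw [step_rotation_apply_zero, hRodd, hL]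
    | 1 => rw [step_rotation_apply_one, hLodd, hR, neg_neg]
  · have hnext : 2 * y + 1 + 1 = 2 * (y + 1) := by ring
    have hprev : 2 * y + 1 = 2 * (y + 1) - 1 := by ring
    match i with
    | 0 => rw [step_rotation_apply_zero, hnext, hR, hprev, hLodd, neg_mul, mul_assoc, hsq,
        mul_neg_one, neg_neg]
    | 1 => rw [step_rotation_apply_one, add_sub_cancel_right, hL, hRodd, mul_assoc, hsq,
        mul_neg_one]
end

section
/- Let U be a 2×2 real unitary (orthogonal) matrix defining a quantum walk on ℤ, and let φ = ᵀ[α, β] ∈ ℍ² with |α|² + |β|² = 1 be a quaternionic initial state at the origin. Then there exists a complex initial state φ̃ = ᵀ[α̃, β̃] ∈ ℂ² with |α̃|² + |β̃|² = 1 such that P(Xₙ^φ = x) = P(Xₙ^{φ̃} = x) for all n ≥ 0 and x ∈ ℤ. -/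
open Quaternion Matrix

/-- the standard embedding of ℂ into the quaternions -/
noncomputable def toQ (z : ℂ) : ℍ[ℝ] := ⟨z.re, z.im, 0, 0⟩

/-!
A real coin acts on the two coefficient fields of `r • α + s • β` separately, so the walk started
from `φ₀ α β` stays of the form `r • α + s • β` with real amplitudes `r, s` that do not depend on
`α, β`. Hence every probability is a quadratic form in `(α, β)` through its Gram data
`‖α‖, ‖β‖, ⟪α, β⟫` only, and any two vectors of a real inner product space have a copy with the
same Gram data in the plane `ℂ ⊆ ℍ`.
-/

open RealInnerProductSpace

noncomputable def realStep (P Q : Matrix (Fin 2) (Fin 2) ℝ) (Ψ : ℤ → Fin 2 → ℝ) :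
    ℤ → Fin 2 → ℝ :=
  fun x => P *ᵥ Ψ (x + 1) + Q *ᵥ Ψ (x - 1)

theorem norm_smul_add_smul_sq {E : Type*} [NormedAddCommGroup E] [InnerProductSpace ℝ E]
    (r s : ℝ) (u v : E) :
    ‖r • u + s • v‖ ^ 2 = r ^ 2 * ‖u‖ ^ 2 + s ^ 2 * ‖v‖ ^ 2 + 2 * r * s * ⟪u, v⟫ := by
  rw [norm_add_sq_real, real_inner_smul_left, real_inner_smul_right, norm_smul, norm_smul,
    Real.norm_eq_abs, Real.norm_eq_abs, mul_pow, mul_pow, sq_abs, sq_abs]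
  ring

section RealCoin

variable (P Q : Matrix (Fin 2) (Fin 2) ℝ)

theorem step_map_smul_add_smul (r s : ℤ → Fin 2 → ℝ) (α β : ℍ[ℝ]) :
    step (P.map (↑)) (Q.map (↑)) (fun x i => r x i • α + s x i • β) =
      fun x i => realStep P Q r x i • α + realStep P Q s x i • β := by
  funext x i
  simp only [step, realStep, mulVec, dotProduct, Fin.sum_univ_two, map_apply, Pi.add_apply,
    coe_mul_eq_smul, smul_add, smul_smul, add_smul]
  abel

theorem iterate_step_map_smul_add_smul (r s : ℤ → Fin 2 → ℝ) (α β : ℍ[ℝ]) (n : ℕ) :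
    (step (P.map (↑)) (Q.map (↑)))^[n] (fun x i => r x i • α + s x i • β) =
      fun x i => (realStep P Q)^[n] r x i • α + (realStep P Q)^[n] s x i • β := by
  induction n generalizing r s with
  | zero => rfl
  | succ n ih => rw [Function.iterate_succ_apply, step_map_smul_add_smul, ih]; rfl

theorem φ₀_eq_smul_add_smul (α β : ℍ[ℝ]) :
    φ₀ α β = fun x i =>
      (Pi.single 0 (Pi.single 0 1) : ℤ → Fin 2 → ℝ) x i • α +
        (Pi.single 0 (Pi.single 1 1) : ℤ → Fin 2 → ℝ) x i • β := by
  funext x i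
  by_cases hx : x = 0 <;> fin_cases i <;> simp [φ₀, hx]

theorem prob_map_eq_of_inner_eq {α β α' β' : ℍ[ℝ]} (hα : ‖α'‖ = ‖α‖) (hβ : ‖β'‖ = ‖β‖)
    (hαβ : ⟪α', β'⟫ = ⟪α, β⟫) (n : ℕ) (x : ℤ) :
    prob (P.map (↑)) (Q.map (↑)) (φ₀ α β) n x = prob (P.map (↑)) (Q.map (↑)) (φ₀ α' β') n x := by
  simp only [prob, φ₀_eq_smul_add_smul, iterate_step_map_smul_add_smul, norm_smul_add_smul_sq,
    hα, hβ, hαβ]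

end RealCoin

theorem inner_toQ (z w : ℂ) : ⟪toQ z, toQ w⟫ = ⟪z, w⟫ := by
  simp only [Quaternion.inner_def, Quaternion.re_mul, Quaternion.re_star, Quaternion.imI_star,
    Quaternion.imJ_star, Quaternion.imK_star, Complex.inner]
  simp [toQ]
  ring

theorem norm_toQ (z : ℂ) : ‖toQ z‖ = ‖z‖ := by
  rw [norm_eq_sqrt_real_inner, norm_eq_sqrt_real_inner (F := ℂ), inner_toQ]

theorem exists_complex_norm_inner_eq {E : Type*} [NormedAddCommGroup E] [InnerProductSpace ℝ E]
    (u v : E) : ∃ z w : ℂ, ‖z‖ = ‖u‖ ∧ ‖w‖ = ‖v‖ ∧ ⟪z, w⟫ = ⟪u, v⟫ := by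
  -- `z = ‖u‖`, `w = t + i √(‖v‖² - t²)`; for `u = 0` the junk value `t = 0` keeps this uniform
  set t := ⟪u, v⟫ / ‖u‖
  have ht : t ^ 2 ≤ ‖v‖ ^ 2 := by
    rw [div_pow]
    refine div_le_of_le_mul₀ (sq_nonneg _) (sq_nonneg _) ?_
    rw [← mul_pow, mul_comm]
    exact sq_le_sq' (neg_le_of_abs_le (abs_real_inner_le_norm u v)) (real_inner_le_norm u v)
  have hut : t * ‖u‖ = ⟪u, v⟫ := by
    rcases eq_or_ne u 0 with rfl | hu
    · simp
    · exact div_mul_cancel₀ _ (norm_ne_zero_iff.mpr hu)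
  refine ⟨‖u‖, ⟨t, √(‖v‖ ^ 2 - t ^ 2)⟩, by simp, ?_, by simpa [Complex.inner] using hut⟩
  rw [← sq_eq_sq₀ (norm_nonneg _) (norm_nonneg _), Complex.sq_norm, Complex.normSq_mk,
    ← sq, ← sq, Real.sq_sqrt (sub_nonneg.mpr ht)]
  ring

theorem real_coin_quaternion_reduces_to_complex_general (a b c d : ℝ)
    (α β : ℍ[ℝ]) (h : ‖α‖ ^ 2 + ‖β‖ ^ 2 = 1) :
    ∃ α' β' : ℂ, ‖α'‖ ^ 2 + ‖β'‖ ^ 2 = 1 ∧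
      ∀ (n : ℕ) (x : ℤ),
        prob !![(a : ℍ[ℝ]), (b : ℍ[ℝ]); 0, 0] !![0, 0; (c : ℍ[ℝ]), (d : ℍ[ℝ])] (φ₀ α β) n x =
        prob !![(a : ℍ[ℝ]), (b : ℍ[ℝ]); 0, 0] !![0, 0; (c : ℍ[ℝ]), (d : ℍ[ℝ])]
          (φ₀ (toQ α') (toQ β')) n x := by
  obtain ⟨α', β', hα, hβ, hαβ⟩ := exists_complex_norm_inner_eq α β
  refine ⟨α', β', by rw [hα, hβ, h], fun n x => ?_⟩
  have hP : !![(a : ℍ[ℝ]), (b : ℍ[ℝ]); 0, 0] = (!![a, b; 0, 0]).map (↑) := by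
    ext i j : 1; fin_cases i <;> fin_cases j <;> simp
  have hQ : !![0, 0; (c : ℍ[ℝ]), (d : ℍ[ℝ])] = (!![0, 0; c, d]).map (↑) := by
    ext i j : 1; fin_cases i <;> fin_cases j <;> simp
  rw [hP, hQ]
  exact prob_map_eq_of_inner_eq _ _ (by rw [norm_toQ, hα]) (by rw [norm_toQ, hβ])
    (by rw [inner_toQ, hαβ]) n x

theorem real_coin_quaternion_reduces_to_complex (a b c d : ℝ)
    (hU : (!![a, b; c, d] : Matrix (Fin 2) (Fin 2) ℝ) * (!![a, b; c, d])ᵀ = 1)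
    (α β : ℍ[ℝ]) (h : ‖α‖ ^ 2 + ‖β‖ ^ 2 = 1) :
    ∃ α' β' : ℂ, ‖α'‖ ^ 2 + ‖β'‖ ^ 2 = 1 ∧
      ∀ (n : ℕ) (x : ℤ),
        prob !![(a : ℍ[ℝ]), (b : ℍ[ℝ]); 0, 0] !![0, 0; (c : ℍ[ℝ]), (d : ℍ[ℝ])] (φ₀ α β) n x =
        prob !![(a : ℍ[ℝ]), (b : ℍ[ℝ]); 0, 0] !![0, 0; (c : ℍ[ℝ]), (d : ℍ[ℝ])]
          (φ₀ (toQ α') (toQ β')) n x :=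
  real_coin_quaternion_reduces_to_complex_general a b c d α β h
end
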